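/- Define the FNIG kurtosis β₂(t) = 3 √(π/2) e^{-αβt} (αβt)^{-1/2} K_{1/2-4H}(αβt) / (K_{1/2-2H}(αβt))². Then β₂(t) → 3 as t → ∞. -/
import Mathlib

open MeasureTheory Real Set Filter

/-- Integral representation of the modified Bessel function of the third kind. -/
noncomputable def besselK (ν ω : ℝ) : ℝ :=
  (1/2) * ∫ x in Ioi (0:ℝ), x ^ (ν - 1) * Real.exp (-(ω/2) * (x + x⁻¹))

/-- The kurtosis of the FNIG marginal. -/
noncomputable def fnigKurtosis (α β H t : ℝ) : ℝ :=
  3 * Real.sqrt (π / 2) * Real.exp (-(α * β * t)) * (α * β * t) ^ (-(1:ℝ)/2)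
    * besselK (1/2 - 4*H) (α * β * t) / (besselK (1/2 - 2*H) (α * β * t)) ^ 2

/-- The rescaled Laplace-type integrand. -/
noncomputable def phiFn (ν ω t : ℝ) : ℝ :=
  Real.exp (ν * (t / Real.sqrt ω) - ω * (Real.cosh (t / Real.sqrt ω) - 1))

lemma besselK_eq_cosh (ν ω : ℝ) :
    besselK ν ω = (1/2) * ∫ u : ℝ, Real.exp (ν * u - ω * Real.cosh u) := by
  have h := integral_image_eq_integral_abs_deriv_smul (MeasurableSet.univ)
      (fun x (_ : x ∈ (univ : Set ℝ)) => (Real.hasDerivAt_exp x).hasDerivWithinAt)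
      (Real.exp_injective.injOn)
      (fun x => x ^ (ν - 1) * Real.exp (-(ω/2) * (x + x⁻¹)))
  rw [image_univ, Real.range_exp] at h
  unfold besselK
  rw [h, setIntegral_univ]
  congr 1
  apply integral_congr_ae
  filter_upwards with u
  have hpos := Real.exp_pos u
  rw [smul_eq_mul, abs_of_pos hpos, Real.rpow_def_of_pos hpos, Real.log_exp,
    ← Real.exp_neg, ← Real.exp_add, ← Real.exp_add, Real.cosh_eq]
  congr 1
  ring

lemma sqrt_exp_besselK_eq (ν ω : ℝ) (hω : 0 < ω) :
    Real.sqrt ω * Real.exp ω * besselK ν ω = (1/2) * ∫ t : ℝ, phiFn ν ω t := by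
  have hs : 0 < Real.sqrt ω := Real.sqrt_pos.2 hω
  have hcomp := MeasureTheory.Measure.integral_comp_div
    (fun u : ℝ => Real.exp (ν * u - ω * Real.cosh u)) (Real.sqrt ω)
  rw [abs_of_pos hs, smul_eq_mul] at hcomp
  have hphi : ∫ t : ℝ, phiFn ν ω t
      = Real.exp ω * ∫ t : ℝ, Real.exp (ν * (t / Real.sqrt ω) - ω * Real.cosh (t / Real.sqrt ω)) := by
    rw [← MeasureTheory.integral_const_mul]
    apply integral_congr_ae
    filter_upwards with t
    rw [← Real.exp_add]
    unfold phiFn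
    congr 1
    ring
  rw [besselK_eq_cosh, hphi, hcomp]
  ring

lemma sq_le_sinh_sq (x : ℝ) : x ^ 2 ≤ Real.sinh x ^ 2 := by
  have h : |x| ≤ |Real.sinh x| := by
    rw [Real.abs_sinh]
    exact (Real.self_le_sinh_iff.2 (abs_nonneg x))
  calc x ^ 2 = |x| ^ 2 := (sq_abs x).symm
    _ ≤ |Real.sinh x| ^ 2 := by nlinarith [abs_nonneg x]
    _ = Real.sinh x ^ 2 := sq_abs _

lemma half_sq_le_cosh_sub_one (y : ℝ) : y ^ 2 / 2 ≤ Real.cosh y - 1 := by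
  have h1 : Real.cosh y = 2 * Real.sinh (y/2) ^ 2 + 1 := by
    have := Real.cosh_two_mul (y/2)
    have h2 := Real.cosh_sq (y/2)
    rw [show 2 * (y/2) = y by ring] at this
    linarith
  have := sq_le_sinh_sq (y/2)
  nlinarith

lemma phiFn_le (ν ω t : ℝ) (hω : 1 ≤ ω) :
    phiFn ν ω t ≤ Real.exp (ν ^ 2) * Real.exp (-(1/4) * t ^ 2) := by
  have hω0 : 0 < ω := lt_of_lt_of_le one_pos hω
  have hs1 : 1 ≤ Real.sqrt ω := by
    rw [show (1:ℝ) = Real.sqrt 1 by simp]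
    exact Real.sqrt_le_sqrt hω
  have hs0 : 0 < Real.sqrt ω := lt_of_lt_of_le one_pos hs1
  unfold phiFn
  rw [← Real.exp_add]
  apply Real.exp_le_exp.2
  have h1 : ν * (t / Real.sqrt ω) ≤ |ν| * |t| := by
    have : ν * (t / Real.sqrt ω) ≤ |ν * (t / Real.sqrt ω)| := le_abs_self _
    refine this.trans ?_
    rw [abs_mul, abs_div, abs_of_pos hs0]
    have : |t| / Real.sqrt ω ≤ |t| := by
      apply div_le_self (abs_nonneg t) hs1
    exact mul_le_mul_of_nonneg_left this (abs_nonneg ν)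
  have h2 : t ^ 2 / 2 ≤ ω * (Real.cosh (t / Real.sqrt ω) - 1) := by
    have := half_sq_le_cosh_sub_one (t / Real.sqrt ω)
    have hsq : (t / Real.sqrt ω) ^ 2 = t ^ 2 / ω := by
      rw [div_pow, Real.sq_sqrt hω0.le]
    rw [hsq] at this
    calc t ^ 2 / 2 = ω * (t ^ 2 / ω / 2) := by field_simp
      _ ≤ ω * (Real.cosh (t / Real.sqrt ω) - 1) := by
          apply mul_le_mul_of_nonneg_left this hω0.le
  nlinarith [sq_nonneg (|ν| - |t| / 2), sq_abs ν, sq_abs t]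

lemma phiFn_tendsto (ν t : ℝ) :
    Tendsto (fun ω => phiFn ν ω t) atTop (nhds (Real.exp (-(1/2) * t ^ 2))) := by
  have hsqrt : Tendsto Real.sqrt atTop atTop := by
    apply Tendsto.congr (fun x => (Real.sqrt_eq_rpow x).symm)
    exact tendsto_rpow_atTop (by norm_num)
  have h1 : Tendsto (fun ω => ν * (t / Real.sqrt ω)) atTop (nhds 0) := by
    have : Tendsto (fun ω => ν * t / Real.sqrt ω) atTop (nhds 0) :=
      Tendsto.div_atTop tendsto_const_nhds hsqrt
    refine this.congr fun ω => by ring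
  -- the key limit: sqrt ω * sinh (t / (2 * sqrt ω)) → t / 2
  have hL : Tendsto (fun ω => Real.sqrt ω * Real.sinh (t / (2 * Real.sqrt ω)))
      atTop (nhds (t / 2)) := by
    rcases eq_or_ne t 0 with rfl | ht
    · simp only [Real.sinh_zero, div_zero, mul_zero, zero_div]
      exact tendsto_const_nhds
    · have hslope : Tendsto (fun y : ℝ => Real.sinh y / y) (nhdsWithin 0 {0}ᶜ) (nhds 1) := by
        have := (hasDerivAt_iff_tendsto_slope).1 (Real.hasDerivAt_sinh 0)
        rw [Real.cosh_zero] at this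
        refine this.congr' ?_
        filter_upwards [self_mem_nhdsWithin] with y hy
        simp [slope_def_field, Real.sinh_zero, div_eq_iff]
      have hy : Tendsto (fun ω => t / (2 * Real.sqrt ω)) atTop (nhdsWithin 0 {0}ᶜ) := by
        apply tendsto_nhdsWithin_of_tendsto_nhds_of_eventually_within
        · have : Tendsto (fun ω => 2 * Real.sqrt ω) atTop atTop :=
            Tendsto.const_mul_atTop (by norm_num) hsqrt
          exact Tendsto.div_atTop tendsto_const_nhds this
        · filter_upwards [eventually_gt_atTop 0] with ω hω
          have : 0 < Real.sqrt ω := Real.sqrt_pos.2 hω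
          simp only [mem_compl_iff, mem_singleton_iff]
          positivity
      have hmain : Tendsto (fun ω => (t / 2) * (Real.sinh (t / (2 * Real.sqrt ω)) / (t / (2 * Real.sqrt ω))))
          atTop (nhds (t / 2)) := by
        have := (hslope.comp hy).const_mul (t / 2)
        simpa using this
      refine hmain.congr' ?_
      filter_upwards [eventually_gt_atTop 0] with ω hω
      have hs : 0 < Real.sqrt ω := Real.sqrt_pos.2 hω
      field_simp
  have h2 : Tendsto (fun ω => ω * (Real.cosh (t / Real.sqrt ω) - 1)) atTop
      (nhds ((1/2) * t ^ 2)) := by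
    have hsq : Tendsto (fun ω => 2 * (Real.sqrt ω * Real.sinh (t / (2 * Real.sqrt ω))) ^ 2)
        atTop (nhds (2 * (t / 2) ^ 2)) := by
      exact ((hL.pow 2).const_mul 2)
    have heq : ∀ᶠ ω in atTop, 2 * (Real.sqrt ω * Real.sinh (t / (2 * Real.sqrt ω))) ^ 2
        = ω * (Real.cosh (t / Real.sqrt ω) - 1) := by
      filter_upwards [eventually_gt_atTop 0] with ω hω
      have hs : 0 < Real.sqrt ω := Real.sqrt_pos.2 hω
      have hcosh : Real.cosh (t / Real.sqrt ω) = 2 * Real.sinh (t / (2 * Real.sqrt ω)) ^ 2 + 1 := by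
        have h1 := Real.cosh_two_mul (t / (2 * Real.sqrt ω))
        have h2 := Real.cosh_sq (t / (2 * Real.sqrt ω))
        rw [show 2 * (t / (2 * Real.sqrt ω)) = t / Real.sqrt ω by field_simp] at h1
        linarith
      rw [hcosh, mul_pow, Real.sq_sqrt hω.le]
      ring
    have := hsq.congr' heq
    convert this using 2
    ring
  have : Tendsto (fun ω => ν * (t / Real.sqrt ω) - ω * (Real.cosh (t / Real.sqrt ω) - 1))
      atTop (nhds (-(1/2) * t ^ 2)) := by
    have := h1.sub h2
    convert this using 1
    ring
  exact (Real.continuous_exp.continuousAt.tendsto).comp this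

lemma phiFn_integrable (ν ω : ℝ) (hω : 1 ≤ ω) : Integrable (phiFn ν ω) := by
  have hcont : Continuous (phiFn ν ω) := by
    unfold phiFn
    fun_prop
  refine Integrable.mono ((integrable_exp_neg_mul_sq (by norm_num : (0:ℝ) < 1/4)).const_mul
      (Real.exp (ν ^ 2))) hcont.aestronglyMeasurable ?_
  filter_upwards with t
  have h1 : |phiFn ν ω t| = phiFn ν ω t := abs_of_pos (by unfold phiFn; positivity)
  rw [Real.norm_eq_abs, Real.norm_eq_abs, h1, abs_of_pos (by positivity)]
  exact phiFn_le ν ω t hω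

lemma besselK_tendsto (ν : ℝ) :
    Tendsto (fun ω => Real.sqrt ω * Real.exp ω * besselK ν ω) atTop
      (nhds (Real.sqrt (π / 2))) := by
  have hgauss : ∫ t : ℝ, Real.exp (-(1/2) * t ^ 2) = Real.sqrt (2 * π) := by
    rw [integral_gaussian]
    norm_num
    ring
  have hlim : Tendsto (fun ω => (1/2) * ∫ t : ℝ, phiFn ν ω t) atTop
      (nhds ((1/2) * Real.sqrt (2 * π))) := by
    apply Tendsto.const_mul
    rw [← hgauss]
    apply tendsto_integral_filter_of_dominated_convergence
      (fun t => Real.exp (ν ^ 2) * Real.exp (-(1/4) * t ^ 2))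
    · filter_upwards with ω
      have : Continuous (phiFn ν ω) := by unfold phiFn; fun_prop
      exact this.aestronglyMeasurable
    · filter_upwards [eventually_ge_atTop 1] with ω hω
      filter_upwards with t
      have h1 : |phiFn ν ω t| = phiFn ν ω t := abs_of_pos (by unfold phiFn; positivity)
      rw [Real.norm_eq_abs, h1]
      exact phiFn_le ν ω t hω
    · exact (integrable_exp_neg_mul_sq (by norm_num : (0:ℝ) < 1/4)).const_mul _
    · filter_upwards with t
      exact phiFn_tendsto ν t
  have hval : (1/2) * Real.sqrt (2 * π) = Real.sqrt (π / 2) := by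
    rw [show (2:ℝ) * π = 4 * (π / 2) by ring, show (4:ℝ) = 2 ^ 2 by norm_num,
      Real.sqrt_mul (by positivity), Real.sqrt_sq (by norm_num)]
    ring
  rw [← hval]
  refine hlim.congr' ?_
  filter_upwards [eventually_gt_atTop 0] with ω hω
  exact (sqrt_exp_besselK_eq ν ω hω).symm

lemma besselK_pos (ν ω : ℝ) (hω : 1 ≤ ω) : 0 < besselK ν ω := by
  have hω0 : 0 < ω := lt_of_lt_of_le one_pos hω
  have hs : 0 < Real.sqrt ω := Real.sqrt_pos.2 hω0
  have he : 0 < Real.exp ω := Real.exp_pos ω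
  have key := sqrt_exp_besselK_eq ν ω hω0
  have hint : 0 < ∫ t : ℝ, phiFn ν ω t := by
    rw [integral_pos_iff_support_of_nonneg_ae (f := phiFn ν ω)
      (Filter.Eventually.of_forall fun t => le_of_lt (by unfold phiFn; positivity))
      (phiFn_integrable ν ω hω)]
    have hsupp : Function.support (phiFn ν ω) = univ := by
      ext t
      simp [Function.mem_support, phiFn, Real.exp_ne_zero]
    rw [hsupp]
    simp [Real.volume_univ]
  have hprod : 0 < Real.sqrt ω * Real.exp ω := mul_pos hs he
  nlinarith

theorem fnig_kurtosis_tendsto_three (α β H : ℝ) (hα : 0 < α) (hβ : 0 < β)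
    (hH0 : 0 < H) (hH1 : H < 1) :
    Tendsto (fun t => fnigKurtosis α β H t) atTop (nhds 3) := by
  set c : ℝ := Real.sqrt (π / 2) with hc_def
  have hc : 0 < c := Real.sqrt_pos.2 (by positivity)
  have hω : Tendsto (fun t => α * β * t) atTop atTop := by
    apply Tendsto.const_mul_atTop (by positivity : 0 < α * β) tendsto_id
  set ν₁ : ℝ := 1/2 - 4*H
  set ν₂ : ℝ := 1/2 - 2*H
  have G1 : Tendsto (fun t => Real.sqrt (α*β*t) * Real.exp (α*β*t) * besselK ν₁ (α*β*t))
      atTop (nhds c) := (besselK_tendsto ν₁).comp hω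
  have G2 : Tendsto (fun t => Real.sqrt (α*β*t) * Real.exp (α*β*t) * besselK ν₂ (α*β*t))
      atTop (nhds c) := (besselK_tendsto ν₂).comp hω
  have hlim : Tendsto (fun t =>
      3 * c * (Real.sqrt (α*β*t) * Real.exp (α*β*t) * besselK ν₁ (α*β*t))
        / (Real.sqrt (α*β*t) * Real.exp (α*β*t) * besselK ν₂ (α*β*t)) ^ 2)
      atTop (nhds 3) := by
    have h := ((G1.const_mul (3 * c)).div (G2.pow 2) (by positivity))
    have hval : 3 * c * c / c ^ 2 = 3 := by
      field_simp
    rw [hval] at h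
    exact h
  refine hlim.congr' ?_
  have hev : ∀ᶠ t in atTop, 1 ≤ α * β * t := hω.eventually (eventually_ge_atTop 1)
  filter_upwards [hev] with t ht
  set ω := α * β * t with hωdef
  have hω0 : 0 < ω := lt_of_lt_of_le one_pos ht
  have hs : 0 < Real.sqrt ω := Real.sqrt_pos.2 hω0
  have he : 0 < Real.exp ω := Real.exp_pos ω
  have hK2 : 0 < besselK ν₂ ω := besselK_pos ν₂ ω ht
  have hrpow : ω ^ (-(1:ℝ)/2) = (Real.sqrt ω)⁻¹ := by
    rw [show -(1:ℝ)/2 = -(1/2) by ring, Real.rpow_neg hω0.le, Real.sqrt_eq_rpow]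
  unfold fnigKurtosis
  rw [← hc_def]
  show 3 * c * (Real.sqrt ω * Real.exp ω * besselK ν₁ ω)
        / (Real.sqrt ω * Real.exp ω * besselK ν₂ ω) ^ 2
      = 3 * c * Real.exp (-ω) * ω ^ (-(1:ℝ)/2) * besselK ν₁ ω / besselK ν₂ ω ^ 2
  rw [hrpow, Real.exp_neg]
  have hωsq : Real.sqrt ω * Real.sqrt ω = ω := Real.mul_self_sqrt hω0.le
  field_simp
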